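/- Let p be a prime, let K be an algebraically closed field of characteristic p, and let T be a ℤ-weighted lattice tile whose weights w : ℤ×ℤ → ℤ are supported in ℕ×ℕ. Assume that for every pair of coprime nonzero integers c, d, the weighted areas of the (−c/d)-slope classes of T are not all divisible by p. Let f̄_T ∈ 𝔽_p[X,Y] be the reduction of f_T = ∑ w_{ij}X^iY^j(X−1)(Y−1) modulo p, let m be the degree of f̄_T in X and n its degree in Y. If α, β ∈ K^× satisfy f̄_T(α^k, β^k) = 0 for every integer k ≥ 1, then either α^k = 1 for some 1 ≤ k ≤ 2mn or β^k = 1 for some 1 ≤ k ≤ 2mn. -/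

import Mathlib

open Finset MvPolynomial

/-- The reduction mod `p` of the polynomial
`f_T = ∑ w_{ij} X^i Y^j (X-1)(Y-1) ∈ ℤ[X,Y]` of a lattice tile with weights `w`
supported in `ℕ × ℕ` (here `X = X 0`, `Y = X 1`). -/
noncomputable def firstQuadrantPolyMod (p : ℕ) (w : ℤ × ℤ →₀ ℤ) :
    MvPolynomial (Fin 2) (ZMod p) :=
  w.sum fun ij a =>
    C (a : ZMod p) * X 0 ^ ij.1.toNat * X 1 ^ ij.2.toNat * (X 0 - 1) * (X 1 - 1)

/-! Put `θ x = α ^ x₀ * β ^ x₁` for an exponent `x`. Since `f̄_T(α ^ k, β ^ k) = ∑ x, c_x θ(x) ^ k`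
vanishes for all `k ≥ 1`, independence of the characters `k ↦ γ ^ k` makes the coefficient sum of
`f̄_T` over every fibre of `θ` vanish. As `f̄_T ≠ 0`, some fibre has two points, giving a relation
`α ^ u * β ^ v = 1` with `|u| ≤ m`, `|v| ≤ n`. For two such relations, `α` is killed by the
determinant `u v' - u' v`, of absolute value at most `2mn`; so if neither `α` nor `β` has order at
most `2mn`, all these relations are proportional, and every fibre of `θ` lies on a line
`c x₀ + d x₁ = const` with `c, d` coprime and nonzero. Hence substituting `X ↦ T ^ c`, `Y ↦ T ^ d`
kills `f̄_T = G (X - 1)(Y - 1)`, and cancelling `(T ^ c - 1)(T ^ d - 1)` in the domain `𝔽_p[T, T⁻¹]`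
kills `G`, whose coefficients are the weighted areas of the `(-c/d)`-slope classes mod `p`. -/

theorem Finset.sum_filter_eq_zero_of_refines {ι κ κ' M : Type*} [AddCommMonoid M]
    [DecidableEq κ] [DecidableEq κ'] {s : Finset ι} {f : ι → M} {g : ι → κ} {g' : ι → κ'}
    (hgg' : ∀ x ∈ s, ∀ y ∈ s, g x = g y → g' x = g' y) (hg : ∀ c, ∑ x ∈ s with g x = c, f x = 0)
    (c' : κ') : ∑ x ∈ s with g' x = c', f x = 0 := by
  rw [← sum_fiberwise_of_maps_to (g := g) (t := {x ∈ s | g' x = c'}.image g)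
    (fun x hx => mem_image_of_mem g hx)]
  refine sum_eq_zero fun b hb => ?_
  obtain ⟨x₀, hx₀, rfl⟩ := mem_image.1 hb
  rw [mem_filter] at hx₀
  convert hg (g x₀) using 2
  ext y
  simp only [mem_filter]
  constructor
  · exact fun ⟨⟨hy, _⟩, hgy⟩ => ⟨hy, hgy⟩
  · exact fun ⟨hy, hgy⟩ => ⟨⟨hy, hx₀.2 ▸ hgg' y hy x₀ hx₀.1 hgy⟩, hgy⟩

theorem Finset.exists_ne_map_eq_of_sum_fiber_eq_zero {ι κ M : Type*} [AddCommMonoid M]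
    [DecidableEq κ] {s : Finset ι} {f : ι → M} {g : ι → κ} {x : ι} (hx : x ∈ s) (hfx : f x ≠ 0)
    (hg : ∀ c, ∑ y ∈ s with g y = c, f y = 0) : ∃ y ∈ s, y ≠ x ∧ g y = g x := by
  by_contra! H
  have hfiber : {y ∈ s | g y = g x} = {x} := by
    refine eq_singleton_iff_unique_mem.2 ⟨mem_filter.2 ⟨hx, rfl⟩, fun y hy => ?_⟩
    by_contra hyx
    exact H y (mem_filter.1 hy).1 hyx (mem_filter.1 hy).2
  exact hfx (by simpa [hfiber] using hg (g x))

theorem Units.eq_zero_of_forall_sum_mul_pow_eq_zero {L : Type*} [CommRing L] [IsDomain L]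
    {s : Finset Lˣ} {c : Lˣ → L} (h : ∀ k, 1 ≤ k → ∑ γ ∈ s, c γ * (γ : L) ^ k = 0) :
    ∀ γ ∈ s, c γ = 0 := by
  have hli : LinearIndependent L fun γ : Lˣ => ⇑(powersHom L γ) :=
    (linearIndependent_monoidHom (Multiplicative ℕ) L).comp _
      ((powersHom L).injective.comp Units.val_injective)
  intro γ hγ
  have key := linearIndependent_iff'.1 hli s (fun γ => c γ * γ) ?_ γ hγ
  · simpa using key
  · funext k
    simpa [mul_assoc, pow_succ'] using h (Multiplicative.toAdd k + 1) (Nat.le_add_left 1 _)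

open scoped LaurentPolynomial

namespace LaurentPolynomial

theorem prod_T_pow {ι R : Type*} [CommSemiring R] (s : Finset ι) (a : ι → ℤ) (x : ι → ℕ) :
    ∏ i ∈ s, (T (a i) : R[T;T⁻¹]) ^ x i = T (∑ i ∈ s, a i * x i) := by
  classical
  induction s using Finset.induction_on with
  | empty => simp [T_zero]
  | insert j s hj ih => rw [prod_insert hj, sum_insert hj, ih, T_pow, T_add, mul_comm (x j : ℤ)]

theorem sum_C_mul_T_eq_zero_iff {ι R : Type*} [Semiring R] (s : Finset ι) (c : ι → R)
    (f : ι → ℤ) : ∑ i ∈ s, C (c i) * T (f i) = 0 ↔ ∀ n, ∑ i ∈ s with f i = n, c i = 0 := by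
  have hcoeff : ∀ n, (∑ i ∈ s, C (c i) * T (f i)).coeff n = ∑ i ∈ s with f i = n, c i := by
    simp [← single_eq_C_mul_T, Finsupp.single_apply, sum_filter]
  refine ⟨fun h n => by rw [← hcoeff, h]; rfl, fun h => ?_⟩
  ext n
  rw [hcoeff, h]
  rfl

theorem T_sub_one_ne_zero {R : Type*} [Ring R] [Nontrivial R] {n : ℤ} (hn : n ≠ 0) :
    (T n - 1 : R[T;T⁻¹]) ≠ 0 := by
  rw [sub_ne_zero, ← T_zero]
  intro h
  have := congrArg (fun f : R[T;T⁻¹] => f.coeff n) h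
  simp only [T_apply, hn.symm, if_false] at this
  exact one_ne_zero this

end LaurentPolynomial

namespace MvPolynomial

theorem degreeOf_pos_of_X_sub_one_dvd {σ R : Type*} [CommRing R] [IsDomain R]
    {P : MvPolynomial σ R} (hP : P ≠ 0) {i : σ} (h : X i - 1 ∣ P) : 0 < degreeOf i P := by
  classical
  obtain ⟨Q, rfl⟩ := h
  have hXi : 1 ≤ degreeOf i (X i - 1 : MvPolynomial σ R) := by
    simpa using monomial_le_degreeOf i (m := Finsupp.single i 1) (f := X i - 1) (by
      simp [mem_support_iff, coeff_X, coeff_one, (Finsupp.single_ne_zero.2 one_ne_zero).symm])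
  rw [degreeOf_mul_eq (left_ne_zero_of_mul hP) (right_ne_zero_of_mul hP)]
  omega

variable {σ R : Type*} [CommSemiring R]

noncomputable def laurentEval (a : σ → ℤ) : MvPolynomial σ R →ₐ[R] R[T;T⁻¹] :=
  aeval fun i => LaurentPolynomial.T (a i)

theorem laurentEval_X (a : σ → ℤ) (i : σ) :
    laurentEval a (X i : MvPolynomial σ R) = LaurentPolynomial.T (a i) :=
  aeval_X _ _

theorem laurentEval_apply [Fintype σ] (a : σ → ℤ) (P : MvPolynomial σ R) :
    laurentEval a P = ∑ x ∈ P.support,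
      LaurentPolynomial.C (coeff x P) * LaurentPolynomial.T (∑ i, a i * x i) := by
  rw [laurentEval, aeval_eq_eval₂Hom, coe_eval₂Hom, eval₂_eq']
  simp_rw [LaurentPolynomial.prod_T_pow]
  rfl

theorem laurentEval_eq_zero_iff [Fintype σ] (a : σ → ℤ) (P : MvPolynomial σ R) :
    laurentEval a P = 0 ↔ ∀ n, ∑ x ∈ P.support with ∑ i, a i * x i = n, coeff x P = 0 := by
  rw [laurentEval_apply, LaurentPolynomial.sum_C_mul_T_eq_zero_iff]

theorem sum_fiber_coeff_eq_zero {K : Type*} [Fintype σ] [CommRing K] [IsDomain K]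
    [DecidableEq K] {φ : R →+* K} (hφ : Function.Injective φ) (x : σ → Kˣ)
    {P : MvPolynomial σ R} (h : ∀ k, 1 ≤ k → eval₂ φ (fun i => (x i : K) ^ k) P = 0) (γ : Kˣ) :
    ∑ e ∈ P.support with ∏ i, x i ^ e i = γ, coeff e P = 0 := by
  set θ : (σ →₀ ℕ) → Kˣ := fun e => ∏ i, x i ^ e i
  set s := insert γ (P.support.image θ)
  have hsum : ∀ k, 1 ≤ k →
      ∑ γ' ∈ s, φ (∑ e ∈ P.support with θ e = γ', coeff e P) * (γ' : K) ^ k = 0 := by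
    intro k hk
    rw [← h k hk, eval₂_eq', ← sum_fiberwise_of_maps_to (g := θ) (t := s)
      (fun e he => mem_insert_of_mem (mem_image_of_mem θ he))]
    refine sum_congr rfl fun γ' _ => ?_
    rw [map_sum, sum_mul]
    refine sum_congr rfl fun e he => ?_
    rw [← (mem_filter.1 he).2]
    simp only [θ, Units.coe_prod, Units.val_pow_eq_pow_val, ← prod_pow, ← pow_mul, mul_comm k]
  exact (map_eq_zero_iff φ hφ).1
    (Units.eq_zero_of_forall_sum_mul_pow_eq_zero hsum γ (mem_insert_self γ _))

theorem sum_fiber_coeff_eq_zero_of_fin_two {K : Type*} [CommRing K] [IsDomain K]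
    [DecidableEq K] {φ : R →+* K} (hφ : Function.Injective φ)
    (a b : Kˣ) {P : MvPolynomial (Fin 2) R}
    (h : ∀ k, 1 ≤ k → eval₂ φ ![(a : K) ^ k, (b : K) ^ k] P = 0) (γ : Kˣ) :
    ∑ x ∈ P.support with a ^ x 0 * b ^ x 1 = γ, coeff x P = 0 := by
  have hpow : ∀ k, (fun i => ((![a, b] i : Kˣ) : K) ^ k) = ![(a : K) ^ k, (b : K) ^ k] :=
    fun k => by funext i; fin_cases i <;> rfl
  simpa [Fin.prod_univ_two] using
    sum_fiber_coeff_eq_zero hφ ![a, b] (fun k hk => hpow k ▸ h k hk) γ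

end MvPolynomial

section CommGroup

variable {G : Type*} [CommGroup G] {a b : G}

theorem zpow_mul_sub_mul_eq_one {u v u' v' : ℤ} (h : a ^ u * b ^ v = 1)
    (h' : a ^ u' * b ^ v' = 1) : a ^ (u * v' - u' * v) = 1 := by
  calc a ^ (u * v' - u' * v) = (a ^ u * b ^ v) ^ v' / (a ^ u' * b ^ v') ^ v := by
        rw [mul_zpow, mul_zpow, ← zpow_mul, ← zpow_mul, ← zpow_mul, ← zpow_mul, mul_comm v v',
          mul_div_mul_right_eq_div, zpow_sub, div_eq_mul_inv]
    _ = 1 := by rw [h, h', one_zpow, one_zpow, div_one]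

theorem zpow_ne_one_of_abs_le {N : ℕ} (ha : ∀ k, 1 ≤ k → k ≤ N → a ^ k ≠ 1) {t : ℤ}
    (ht : t ≠ 0) (htN : |t| ≤ N) : a ^ t ≠ 1 := by
  rw [Int.abs_eq_natAbs, Nat.cast_le] at htN
  exact fun h => ha t.natAbs (Int.natAbs_pos.2 ht) htN (pow_natAbs_eq_one.2 h)

variable {m n : ℕ}

theorem mul_eq_mul_of_zpow_mul_zpow_eq_one (ha : ∀ k, 1 ≤ k → k ≤ 2 * m * n → a ^ k ≠ 1)
    {u v u' v' : ℤ} (h : a ^ u * b ^ v = 1) (h' : a ^ u' * b ^ v' = 1) (hu : |u| ≤ m)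
    (hv : |v| ≤ n) (hu' : |u'| ≤ m) (hv' : |v'| ≤ n) : u * v' = u' * v := by
  by_contra hne
  refine zpow_ne_one_of_abs_le ha (sub_ne_zero.2 hne) ?_ (zpow_mul_sub_mul_eq_one h h')
  calc |u * v' - u' * v| ≤ |u| * |v'| + |u'| * |v| := by
        rw [← abs_mul, ← abs_mul]; exact abs_sub _ _
    _ ≤ m * n + m * n := by gcongr
    _ = ((2 * m * n : ℕ) : ℤ) := by push_cast; ring

theorem exists_isCoprime_of_zpow_mul_zpow_eq_one (hm : 1 ≤ m) (hn : 1 ≤ n)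
    (ha : ∀ k, 1 ≤ k → k ≤ 2 * m * n → a ^ k ≠ 1) (hb : ∀ k, 1 ≤ k → k ≤ 2 * m * n → b ^ k ≠ 1)
    {u₀ v₀ : ℤ} (h₀ : a ^ u₀ * b ^ v₀ = 1) (hne : u₀ ≠ 0 ∨ v₀ ≠ 0) (hu₀ : |u₀| ≤ m)
    (hv₀ : |v₀| ≤ n) :
    ∃ c d : ℤ, c ≠ 0 ∧ d ≠ 0 ∧ IsCoprime c d ∧
      ∀ u v : ℤ, |u| ≤ m → |v| ≤ n → a ^ u * b ^ v = 1 → c * u + d * v = 0 := by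
  have hmN : (m : ℤ) ≤ ((2 * m * n : ℕ) : ℤ) := by push_cast; nlinarith
  have hnN : (n : ℤ) ≤ ((2 * m * n : ℕ) : ℤ) := by push_cast; nlinarith
  have hu₀' : u₀ ≠ 0 := by
    rintro rfl
    exact zpow_ne_one_of_abs_le hb (hne.resolve_left (not_not.2 rfl)) (hv₀.trans hnN)
      (by simpa using h₀)
  have hv₀' : v₀ ≠ 0 := by
    rintro rfl
    exact zpow_ne_one_of_abs_le ha hu₀' (hu₀.trans hmN) (by simpa using h₀)
  obtain ⟨g, c, d, hg, hcd, rfl, rfl⟩ := Int.exists_gcd_one' (Int.gcd_pos_of_ne_zero_left v₀ hu₀')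
  refine ⟨d, -c, left_ne_zero_of_mul hv₀', neg_ne_zero.2 (left_ne_zero_of_mul hu₀'),
    (Int.isCoprime_iff_gcd_eq_one.2 hcd).symm.neg_right, fun u v hu hv h => ?_⟩
  have hcross := mul_eq_mul_of_zpow_mul_zpow_eq_one ha h₀ h hu₀ hv₀ hu hv
  have : (g : ℤ) * (d * u + -c * v) = 0 := by linear_combination -hcross
  exact (mul_eq_zero.1 this).resolve_left (by positivity)

theorem exists_isCoprime_level_of_pow_mul_pow_eq (hm : 1 ≤ m) (hn : 1 ≤ n)
    (ha : ∀ k, 1 ≤ k → k ≤ 2 * m * n → a ^ k ≠ 1) (hb : ∀ k, 1 ≤ k → k ≤ 2 * m * n → b ^ k ≠ 1)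
    {S : Finset (Fin 2 →₀ ℕ)} (hS : ∀ x ∈ S, x 0 ≤ m ∧ x 1 ≤ n) {x₀ y₀ : Fin 2 →₀ ℕ}
    (hx₀ : x₀ ∈ S) (hy₀ : y₀ ∈ S) (hne : x₀ ≠ y₀)
    (h₀ : a ^ x₀ 0 * b ^ x₀ 1 = a ^ y₀ 0 * b ^ y₀ 1) :
    ∃ c d : ℤ, c ≠ 0 ∧ d ≠ 0 ∧ IsCoprime c d ∧ ∀ x ∈ S, ∀ y ∈ S,
      a ^ x 0 * b ^ x 1 = a ^ y 0 * b ^ y 1 → c * x 0 + d * x 1 = c * y 0 + d * y 1 := by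
  have hrel : ∀ x ∈ S, ∀ y ∈ S, a ^ x 0 * b ^ x 1 = a ^ y 0 * b ^ y 1 →
      a ^ ((x 0 : ℤ) - y 0) * b ^ ((x 1 : ℤ) - y 1) = 1 ∧
        |(x 0 : ℤ) - y 0| ≤ m ∧ |(x 1 : ℤ) - y 1| ≤ n := by
    intro x hx y hy h
    obtain ⟨hx0, hx1⟩ := hS x hx
    obtain ⟨hy0, hy1⟩ := hS y hy
    refine ⟨?_, abs_le.2 ⟨by omega, by omega⟩, abs_le.2 ⟨by omega, by omega⟩⟩
    rw [zpow_sub, zpow_sub, mul_mul_mul_comm, ← mul_inv, zpow_natCast, zpow_natCast,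
      zpow_natCast, zpow_natCast, h, mul_inv_cancel]
  obtain ⟨hr₀, hu₀, hv₀⟩ := hrel x₀ hx₀ y₀ hy₀ h₀
  have hne' : (x₀ 0 : ℤ) - y₀ 0 ≠ 0 ∨ (x₀ 1 : ℤ) - y₀ 1 ≠ 0 := by
    by_contra! h
    refine hne (Finsupp.ext fun i => ?_)
    fin_cases i <;> simp only [Fin.zero_eta, Fin.mk_one] <;> omega
  obtain ⟨c, d, hc, hd, hcd, hline⟩ :=
    exists_isCoprime_of_zpow_mul_zpow_eq_one hm hn ha hb hr₀ hne' hu₀ hv₀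
  refine ⟨c, d, hc, hd, hcd, fun x hx y hy h => ?_⟩
  obtain ⟨hr, hu, hv⟩ := hrel x hx y hy h
  linear_combination hline _ _ hu hv hr

end CommGroup

noncomputable def tilePolyMod (p : ℕ) (w : ℤ × ℤ →₀ ℤ) : MvPolynomial (Fin 2) (ZMod p) :=
  w.sum fun ij a => C (a : ZMod p) * X 0 ^ ij.1.toNat * X 1 ^ ij.2.toNat

theorem firstQuadrantPolyMod_eq (p : ℕ) (w : ℤ × ℤ →₀ ℤ) :
    firstQuadrantPolyMod p w = tilePolyMod p w * (X 0 - 1) * (X 1 - 1) := by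
  simp only [firstQuadrantPolyMod, tilePolyMod, Finsupp.sum_mul]

theorem degreeOf_firstQuadrantPolyMod_pos {p : ℕ} [Fact p.Prime] {w : ℤ × ℤ →₀ ℤ}
    (h : firstQuadrantPolyMod p w ≠ 0) (i : Fin 2) : 0 < degreeOf i (firstQuadrantPolyMod p w) := by
  refine degreeOf_pos_of_X_sub_one_dvd h ?_
  rw [firstQuadrantPolyMod_eq]
  fin_cases i <;> simp only [Fin.zero_eta, Fin.mk_one]
  · exact ⟨tilePolyMod p w * (X 1 - 1), by ring⟩
  · exact Dvd.intro_left _ rfl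

theorem laurentEval_tilePolyMod (p : ℕ) {w : ℤ × ℤ →₀ ℤ}
    (hsupp : ∀ q ∈ w.support, 0 ≤ q.1 ∧ 0 ≤ q.2) (c d : ℤ) :
    laurentEval ![c, d] (tilePolyMod p w) =
      ∑ q ∈ w.support,
        LaurentPolynomial.C (w q : ZMod p) * LaurentPolynomial.T (c * q.1 + d * q.2) := by
  rw [tilePolyMod, Finsupp.sum, map_sum]
  refine sum_congr rfl fun q hq => ?_
  obtain ⟨h1, h2⟩ := hsupp q hq
  simp only [map_mul, map_pow, laurentEval, aeval_X, aeval_C, ← LaurentPolynomial.C_eq_algebraMap,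
    Matrix.cons_val_zero, Matrix.cons_val_one, LaurentPolynomial.T_pow, mul_assoc,
    ← LaurentPolynomial.T_add, Int.toNat_of_nonneg h1, Int.toNat_of_nonneg h2]
  ring_nf

theorem finsum_slopeClass_eq_sum_filter {M : Type*} [AddCommMonoid M] (f : ℤ × ℤ →₀ M) {c d : ℤ}
    (hcd : IsCoprime c d) (i j : ℤ) :
    ∑ᶠ r : ℤ, f (i + r * d, j - r * c) =
      ∑ q ∈ f.support with c * q.1 + d * q.2 = c * i + d * j, f q := by
  obtain ⟨x, y, hxy⟩ := hcd
  have hinj : Function.Injective fun r : ℤ => (i + r * d, j - r * c) := by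
    intro r r' h
    simp only [Prod.mk.injEq] at h
    linear_combination -(r - r') * hxy - x * h.2 + y * h.1
  have hrange : Set.range (fun r : ℤ => (i + r * d, j - r * c)) =
      {q | c * q.1 + d * q.2 = c * i + d * j} := by
    ext ⟨a, b⟩
    simp only [Set.mem_range, Set.mem_ofPred_eq, Prod.mk.injEq]
    constructor
    · rintro ⟨r, rfl, rfl⟩
      ring
    · intro h
      refine ⟨y * (a - i) - x * (b - j), ?_, ?_⟩
      · linear_combination (a - i) * hxy - x * h
      · linear_combination (b - j) * hxy - y * h
  rw [← finsum_mem_range hinj, hrange]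
  apply finsum_mem_eq_sum_of_inter_support_eq
  ext q
  simp [and_comm]

theorem dvd_finsum_of_laurentEval_firstQuadrantPolyMod_eq_zero {p : ℕ} [Fact p.Prime]
    {w : ℤ × ℤ →₀ ℤ} (hsupp : ∀ q ∈ w.support, 0 ≤ q.1 ∧ 0 ≤ q.2) {c d : ℤ} (hc : c ≠ 0)
    (hd : d ≠ 0) (hcd : IsCoprime c d) (h : laurentEval ![c, d] (firstQuadrantPolyMod p w) = 0)
    (i j : ℤ) : (p : ℤ) ∣ ∑ᶠ r : ℤ, w (i + r * d, j - r * c) := by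
  rw [firstQuadrantPolyMod_eq, map_mul, map_mul, map_sub, map_sub, map_one, laurentEval_X,
    laurentEval_X] at h
  simp only [Matrix.cons_val_zero, Matrix.cons_val_one, mul_eq_zero,
    LaurentPolynomial.T_sub_one_ne_zero hc, LaurentPolynomial.T_sub_one_ne_zero hd, or_false,
    laurentEval_tilePolyMod p hsupp, LaurentPolynomial.sum_C_mul_T_eq_zero_iff] at h
  rw [← ZMod.intCast_zmod_eq_zero_iff_dvd, finsum_slopeClass_eq_sum_filter w hcd, Int.cast_sum]
  exact h _

theorem common_zeros_near_roots_of_unity_char_p_general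
    (p : ℕ) (hp : p.Prime)
    (K : Type*) [Field K] [CharP K p]
    (w : ℤ × ℤ →₀ ℤ)
    (hsupp : ∀ q ∈ w.support, 0 ≤ q.1 ∧ 0 ≤ q.2)
    (hslope : ∀ c d : ℤ, c ≠ 0 → d ≠ 0 → IsCoprime c d →
      ∃ i j : ℤ, ¬ ((p : ℤ) ∣ ∑ᶠ r : ℤ, w (i + r * d, j - r * c)))
    (m n : ℕ)
    (hm : m = (firstQuadrantPolyMod p w).degreeOf 0)
    (hn : n = (firstQuadrantPolyMod p w).degreeOf 1)
    (α β : K) (hα : α ≠ 0) (hβ : β ≠ 0)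
    (hzero : ∀ k : ℕ, 1 ≤ k →
      eval₂ (ZMod.castHom (dvd_refl p) K) ![α ^ k, β ^ k]
        (firstQuadrantPolyMod p w) = 0) :
    (∃ k : ℕ, 1 ≤ k ∧ k ≤ 2 * m * n ∧ α ^ k = 1) ∨
      (∃ k : ℕ, 1 ≤ k ∧ k ≤ 2 * m * n ∧ β ^ k = 1) := by
  classical
  have : Fact p.Prime := ⟨hp⟩
  obtain ⟨a, rfl⟩ : ∃ a : Kˣ, (a : K) = α := ⟨Units.mk0 α hα, rfl⟩
  obtain ⟨b, rfl⟩ : ∃ b : Kˣ, (b : K) = β := ⟨Units.mk0 β hβ, rfl⟩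
  by_contra! hsmall
  have ha : ∀ k, 1 ≤ k → k ≤ 2 * m * n → a ^ k ≠ 1 := fun k hk hkN h =>
    hsmall.1 k hk hkN (by rw [← Units.val_pow_eq_pow_val, h, Units.val_one])
  have hb : ∀ k, 1 ≤ k → k ≤ 2 * m * n → b ^ k ≠ 1 := fun k hk hkN h =>
    hsmall.2 k hk hkN (by rw [← Units.val_pow_eq_pow_val, h, Units.val_one])
  set F := firstQuadrantPolyMod p w
  have hlaurent : ∀ c d : ℤ, c ≠ 0 → d ≠ 0 → IsCoprime c d → laurentEval ![c, d] F ≠ 0 := by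
    intro c d hc hd hcd hF
    obtain ⟨i, j, hij⟩ := hslope c d hc hd hcd
    exact hij (dvd_finsum_of_laurentEval_firstQuadrantPolyMod_eq_zero hsupp hc hd hcd hF i j)
  have hF : F ≠ 0 := fun hF =>
    hlaurent 1 1 one_ne_zero one_ne_zero isCoprime_one_left (by rw [hF, map_zero])
  have hbox : ∀ x ∈ F.support, x 0 ≤ m ∧ x 1 ≤ n := fun x hx =>
    ⟨hm ▸ monomial_le_degreeOf 0 hx, hn ▸ monomial_le_degreeOf 1 hx⟩
  have hfiber :=
    sum_fiber_coeff_eq_zero_of_fin_two (ZMod.castHom (dvd_refl p) K).injective a b hzero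
  obtain ⟨x, hx⟩ := ne_zero_iff.1 hF
  obtain ⟨y, hy, hyx, hθ⟩ := exists_ne_map_eq_of_sum_fiber_eq_zero (mem_support_iff.2 hx) hx hfiber
  obtain ⟨c, d, hc, hd, hcd, hlevel⟩ := exists_isCoprime_level_of_pow_mul_pow_eq
    (hm ▸ degreeOf_firstQuadrantPolyMod_pos hF 0) (hn ▸ degreeOf_firstQuadrantPolyMod_pos hF 1)
    ha hb hbox hy (mem_support_iff.2 hx) hyx hθ
  refine hlaurent c d hc hd hcd ((laurentEval_eq_zero_iff _ _).2 fun s => ?_)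
  simpa [Fin.sum_univ_two] using sum_filter_eq_zero_of_refines hlevel hfiber s

/-- Char-`p` analogue: let `K` be an algebraically closed field of
characteristic `p`, and `T` a ℤ-weighted lattice tile in the first quadrant
such that for all coprime nonzero `c, d` the weighted areas of the
`(-c/d)`-slope classes of `T` are not all divisible by `p`.  If `m, n` are the
`X`- and `Y`-degrees of the reduction `f̄_T ∈ 𝔽_p[X,Y]` and `α, β ∈ K^×`
satisfy `f̄_T(α^k, β^k) = 0` for all `k ≥ 1`, then `α^k = 1` or `β^k = 1` for
some `1 ≤ k ≤ 2mn`. -/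
theorem common_zeros_near_roots_of_unity_char_p
    (p : ℕ) (hp : p.Prime)
    (K : Type*) [Field K] [IsAlgClosed K] [CharP K p]
    (w : ℤ × ℤ →₀ ℤ)
    (hsupp : ∀ q ∈ w.support, 0 ≤ q.1 ∧ 0 ≤ q.2)
    (hslope : ∀ c d : ℤ, c ≠ 0 → d ≠ 0 → IsCoprime c d →
      ∃ i j : ℤ, ¬ ((p : ℤ) ∣ ∑ᶠ r : ℤ, w (i + r * d, j - r * c)))
    (m n : ℕ)
    (hm : m = (firstQuadrantPolyMod p w).degreeOf 0)
    (hn : n = (firstQuadrantPolyMod p w).degreeOf 1)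
    (α β : K) (hα : α ≠ 0) (hβ : β ≠ 0)
    (hzero : ∀ k : ℕ, 1 ≤ k →
      eval₂ (ZMod.castHom (dvd_refl p) K) ![α ^ k, β ^ k]
        (firstQuadrantPolyMod p w) = 0) :
    (∃ k : ℕ, 1 ≤ k ∧ k ≤ 2 * m * n ∧ α ^ k = 1) ∨
      (∃ k : ℕ, 1 ≤ k ∧ k ≤ 2 * m * n ∧ β ^ k = 1) :=
  common_zeros_near_roots_of_unity_char_p_general p hp K w hsupp hslope m n hm hn α β hα hβ hzero
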